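/- arXiv:1610.09850 — 2 statements merged into one kernel-verified Lean document; each statement's English description precedes it below -/
import Mathlib

section
/- For every (x,t) ∈ G* the squared horizontal gradient of the Kaplan norm satisfies |∇_H N(x,t)|² = (|x|⁶ + 16 |J_t x|²) / N(x,t)⁶, where J_t = t_1 J_1 + ⋯ + t_m J_m. -/
open MeasureTheory Filter
open scoped BigOperators ENNReal NNReal

noncomputable section

/-- Points of the Métivier group `G = ℝ^{2n} × ℝ^m`. -/
abbrev GrpPt (n m : ℕ) := (Fin (2*n) → ℝ) × (Fin m → ℝ)

/-- Euclidean norm on `Fin k → ℝ`. -/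
def e2norm {k : ℕ} (x : Fin k → ℝ) : ℝ := Real.sqrt (∑ i, (x i)^2)

/-- Kaplan norm `N(x,t) = (|x|^4 + 16|t|^2)^(1/4)`. -/
def kN {n m : ℕ} (p : GrpPt n m) : ℝ := (e2norm p.1 ^ 4 + 16 * e2norm p.2 ^ 2) ^ ((1:ℝ)/4)

/-- Group multiplication of the Métivier group. -/
def gmul {n m : ℕ} (J : Fin m → Matrix (Fin (2*n)) (Fin (2*n)) ℝ) (p q : GrpPt n m) : GrpPt n m :=
  (p.1 + q.1, p.2 + q.2 + fun k => (1/2 : ℝ) * ∑ i, (J k).mulVec p.1 i * q.1 i)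

/-- Horizontal left-invariant vector field `X_j`. -/
def XD {n m : ℕ} (J : Fin m → Matrix (Fin (2*n)) (Fin (2*n)) ℝ)
    {E : Type*} [NormedAddCommGroup E] [NormedSpace ℝ E]
    (j : Fin (2*n)) (f : GrpPt n m → E) (p : GrpPt n m) : E :=
  fderiv ℝ f p (Pi.single j 1, 0)
    + (1/2 : ℝ) • ∑ k, ((J k).mulVec p.1 j) • fderiv ℝ f p (0, Pi.single k 1)

/-- Squared length of the horizontal gradient. -/
def gradSq {n m : ℕ} (J : Fin m → Matrix (Fin (2*n)) (Fin (2*n)) ℝ)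
    (f : GrpPt n m → ℝ) (p : GrpPt n m) : ℝ := ∑ j, (XD J j f p)^2

/-- Sub-Laplacian `L f = -∑ X_j (X_j f)`. -/
def LSub {n m : ℕ} (J : Fin m → Matrix (Fin (2*n)) (Fin (2*n)) ℝ)
    {E : Type*} [NormedAddCommGroup E] [NormedSpace ℝ E]
    (f : GrpPt n m → E) (p : GrpPt n m) : E := - ∑ j, XD J j (XD J j f) p

/-- Weight `w_α = exp (-N^α)`. -/
def wA {n m : ℕ} (α : ℝ) (p : GrpPt n m) : ℝ := Real.exp (-(kN p ^ α))

/-- Potential `V_α = -(1/4) |grad w_α|²/w_α² - (1/2) (L w_α)/w_α`. -/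
def VA {n m : ℕ} (J : Fin m → Matrix (Fin (2*n)) (Fin (2*n)) ℝ) (α : ℝ) (p : GrpPt n m) : ℝ :=
  -(1/4) * gradSq J (wA α) p / (wA α p)^2 - (1/2) * LSub J (wA α) p / wA α p

/-!
Write `N = ρ ^ (1/4)` with `ρ(x,t) = |x|⁴ + 16|t|²`. The horizontal fields are derivations, so
`|∇_H N|² = (ρ^(-3/4)/4)² |∇_H ρ|²`, and a direct computation gives `X_j ρ = 4(|x|² x_j + 4 (J_t x)_j)`.
Expanding the square, the cross term is a multiple of `⟨x, J_t x⟩`, which vanishes because `J_t`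
is skew-symmetric; hence `|∇_H ρ|² = 16(|x|⁶ + 16|J_t x|²)`, and `ρ^(-3/2) = N⁻⁶`.
-/

open Matrix in
theorem dotProduct_mulVec_self_eq_zero_of_transpose_eq_neg {ι R : Type*} [Fintype ι] [CommRing R]
    [IsAddTorsionFree R] {A : Matrix ι ι R} (hA : Aᵀ = -A) (x : ι → R) :
    x ⬝ᵥ A *ᵥ x = 0 := by
  refine self_eq_neg.mp ?_
  calc x ⬝ᵥ A *ᵥ x = (Aᵀ *ᵥ x) ⬝ᵥ x := by rw [dotProduct_mulVec, mulVec_transpose]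
    _ = -(x ⬝ᵥ A *ᵥ x) := by rw [hA, neg_mulVec, neg_dotProduct, dotProduct_comm]

open Matrix in
theorem transpose_sum_smul_eq_neg {ι κ R : Type*} [Fintype κ] [CommRing R]
    {J : κ → Matrix ι ι R} (hJ : ∀ k, (J k)ᵀ = -J k) (t : κ → R) :
    (∑ k, t k • J k)ᵀ = -∑ k, t k • J k := by
  simp [transpose_sum, transpose_smul, hJ]

theorem sum_sq_pos {ι : Type*} [Fintype ι] {x : ι → ℝ} (hx : x ≠ 0) : 0 < ∑ i, x i ^ 2 := by
  obtain ⟨i, hi⟩ := Function.ne_iff.mp hx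
  exact Finset.sum_pos' (fun _ _ => sq_nonneg _) ⟨i, Finset.mem_univ i, sq_pos_of_ne_zero hi⟩

theorem hasFDerivAt_sum_sq {ι : Type*} [Fintype ι] (x : ι → ℝ) :
    HasFDerivAt (fun y : ι → ℝ => ∑ i, y i ^ 2)
      (∑ i, (2 * x i) • ContinuousLinearMap.proj (R := ℝ) (φ := fun _ : ι => ℝ) i) x := by
  refine HasFDerivAt.fun_sum fun i _ => ?_
  simpa using (hasFDerivAt_apply (𝕜 := ℝ) (F' := fun _ => ℝ) i x).pow 2

theorem e2norm_sq {k : ℕ} (x : Fin k → ℝ) : e2norm x ^ 2 = ∑ i, x i ^ 2 :=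
  Real.sq_sqrt (Finset.sum_nonneg fun _ _ => sq_nonneg _)

section Horizontal

variable {n m : ℕ} (J : Fin m → Matrix (Fin (2*n)) (Fin (2*n)) ℝ)

/-- The tangent vector at `p` of the horizontal field `X_j`. -/
def horizontal (p : GrpPt n m) (j : Fin (2*n)) : GrpPt n m :=
  (Pi.single j 1, fun k => (1/2 : ℝ) * (J k).mulVec p.1 j)

theorem XD_eq_fderiv_horizontal {E : Type*} [NormedAddCommGroup E] [NormedSpace ℝ E]
    (j : Fin (2*n)) (f : GrpPt n m → E) (p : GrpPt n m) :
    XD J j f p = fderiv ℝ f p (horizontal J p j) := by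
  have : horizontal J p j = (Pi.single j 1, 0)
      + (1/2 : ℝ) • ∑ k, ((J k).mulVec p.1 j) • ((0 : Fin (2*n) → ℝ), (Pi.single k 1 : Fin m → ℝ)) := by
    ext k <;> simp [horizontal, Pi.single_apply, Prod.fst_sum, Prod.snd_sum]
  rw [this, map_add, map_smul, map_sum]
  simp_rw [map_smul]
  rfl

variable {φ : ℝ → ℝ} {φ' : ℝ} {f : GrpPt n m → ℝ} {p : GrpPt n m}

theorem XD_comp (j : Fin (2*n)) (hφ : HasDerivAt φ φ' (f p)) (hf : DifferentiableAt ℝ f p) :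
    XD J j (φ ∘ f) p = φ' * XD J j f p := by
  rw [XD_eq_fderiv_horizontal, XD_eq_fderiv_horizontal,
    (hφ.comp_hasFDerivAt p hf.hasFDerivAt).fderiv]
  rfl

theorem gradSq_comp (hφ : HasDerivAt φ φ' (f p)) (hf : DifferentiableAt ℝ f p) :
    gradSq J (φ ∘ f) p = φ' ^ 2 * gradSq J f p := by
  simp only [gradSq, XD_comp J _ hφ hf, mul_pow, Finset.mul_sum]

end Horizontal

section KaplanQuartic

variable {n m : ℕ}

def kNQuartic (p : GrpPt n m) : ℝ := (∑ i, p.1 i ^ 2) ^ 2 + 16 * ∑ k, p.2 k ^ 2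

theorem kN_eq_rpow (p : GrpPt n m) : kN p = kNQuartic p ^ ((1 : ℝ) / 4) := by
  rw [kN, kNQuartic, show 4 = 2 * 2 from rfl, pow_mul, e2norm_sq, e2norm_sq]

theorem kNQuartic_nonneg (p : GrpPt n m) : 0 ≤ kNQuartic p := by
  unfold kNQuartic
  positivity

theorem kN_pow_four (p : GrpPt n m) : kN p ^ 4 = kNQuartic p := by
  rw [kN_eq_rpow, one_div]
  exact_mod_cast Real.rpow_inv_natCast_pow (kNQuartic_nonneg p) four_ne_zero

theorem kNQuartic_pos {p : GrpPt n m} (hp : p ≠ 0) : 0 < kNQuartic p := by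
  have : p.1 ≠ 0 ∨ p.2 ≠ 0 := by
    contrapose! hp
    exact Prod.ext hp.1 hp.2
  unfold kNQuartic
  rcases this with hx | ht
  · have := sum_sq_pos hx
    positivity
  · have := sum_sq_pos ht
    positivity

theorem differentiable_kNQuartic : Differentiable ℝ (kNQuartic (n := n) (m := m)) := by
  unfold kNQuartic
  fun_prop

theorem fderiv_kNQuartic_apply (p v : GrpPt n m) :
    fderiv ℝ kNQuartic p v
      = 4 * (∑ i, p.1 i ^ 2) * ∑ i, p.1 i * v.1 i + 32 * ∑ k, p.2 k * v.2 k := by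
  have hx := (hasFDerivAt_sum_sq p.1).comp p (hasFDerivAt_fst (𝕜 := ℝ) (p := p))
  have ht := (hasFDerivAt_sum_sq p.2).comp p (hasFDerivAt_snd (𝕜 := ℝ) (p := p))
  have h : HasFDerivAt kNQuartic _ p := (hx.pow 2).fun_add (ht.const_mul 16)
  rw [h.fderiv]
  simp only [Function.comp_apply, Nat.add_one_sub_one, pow_one, nsmul_eq_mul, Nat.cast_ofNat,
    add_apply, smul_apply, ContinuousLinearMap.comp_apply,
    ContinuousLinearMap.coe_fst', ContinuousLinearMap.coe_snd', sum_apply,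
    ContinuousLinearMap.proj_apply, smul_eq_mul, mul_assoc, ← Finset.mul_sum]
  ring

open Matrix in
theorem XD_kNQuartic (J : Fin m → Matrix (Fin (2*n)) (Fin (2*n)) ℝ) (j : Fin (2*n))
    (p : GrpPt n m) :
    XD J j kNQuartic p = 4 * ((∑ i, p.1 i ^ 2) * p.1 j + 4 * ((∑ k, p.2 k • J k) *ᵥ p.1) j) := by
  rw [XD_eq_fderiv_horizontal, fderiv_kNQuartic_apply]
  simp only [horizontal, Pi.single_apply, mul_ite, mul_one, mul_zero, Finset.sum_ite_eq',
    Finset.mem_univ, if_true, sum_mulVec, smul_mulVec, Finset.sum_apply, Pi.smul_apply, smul_eq_mul,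
    mul_left_comm _ (1 / 2 : ℝ), ← Finset.mul_sum]
  ring

open Matrix in
theorem gradSq_kNQuartic {J : Fin m → Matrix (Fin (2*n)) (Fin (2*n)) ℝ}
    (hskew : ∀ k, (J k)ᵀ = -J k) (p : GrpPt n m) :
    gradSq J kNQuartic p
      = 16 * ((∑ i, p.1 i ^ 2) ^ 3 + 16 * ∑ j, ((∑ k, p.2 k • J k) *ᵥ p.1) j ^ 2) := by
  set S := ∑ i, p.1 i ^ 2
  set w := (∑ k, p.2 k • J k) *ᵥ p.1
  have hcross : ∑ j, p.1 j * w j = 0 :=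
    dotProduct_mulVec_self_eq_zero_of_transpose_eq_neg (transpose_sum_smul_eq_neg hskew p.2) p.1
  calc gradSq J kNQuartic p
      = ∑ j, (16 * S ^ 2 * p.1 j ^ 2 + 128 * S * (p.1 j * w j) + 256 * w j ^ 2) := by
        refine Finset.sum_congr rfl fun j _ => ?_
        rw [XD_kNQuartic]
        ring
    _ = 16 * (S ^ 3 + 16 * ∑ j, w j ^ 2) := by
        rw [Finset.sum_add_distrib, Finset.sum_add_distrib, ← Finset.mul_sum, ← Finset.mul_sum,
          ← Finset.mul_sum, hcross]
        ring

end KaplanQuartic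

theorem gradSq_kaplan_general (n m : ℕ)
    (J : Fin m → Matrix (Fin (2*n)) (Fin (2*n)) ℝ)
    (hskew : ∀ k, (J k).transpose = -(J k)) :
    ∀ p : GrpPt n m, p ≠ 0 →
      gradSq J kN p
        = (e2norm p.1 ^ 6 + 16 * e2norm ((∑ k, p.2 k • J k).mulVec p.1) ^ 2) / kN p ^ 6 := by
  intro p hp
  have hρ := kNQuartic_pos hp
  have hkN : (kN : GrpPt n m → ℝ) = (fun r : ℝ => r ^ ((1 : ℝ) / 4)) ∘ kNQuartic :=
    funext kN_eq_rpow
  rw [hkN, gradSq_comp J (Real.hasDerivAt_rpow_const (Or.inl hρ.ne'))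
      differentiable_kNQuartic.differentiableAt, gradSq_kNQuartic hskew, ← hkN,
    Real.rpow_sub_one hρ.ne', ← kN_eq_rpow, ← kN_pow_four, show 6 = 2 * 3 from rfl, pow_mul,
    e2norm_sq, e2norm_sq]
  field_simp
  ring

/-- Formula for the squared horizontal gradient of the Kaplan norm on `G*`. -/
theorem gradSq_kaplan (n m : ℕ) (hn : 1 ≤ n) (hm : 1 ≤ m)
    (J : Fin m → Matrix (Fin (2*n)) (Fin (2*n)) ℝ)
    (hskew : ∀ k, (J k).transpose = -(J k))
    (hMet : ∀ t : Fin m → ℝ, t ≠ 0 → IsUnit (∑ k, t k • J k)) :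
    ∀ p : GrpPt n m, p ≠ 0 →
      gradSq J kN p
        = (e2norm p.1 ^ 6 + 16 * e2norm ((∑ k, p.2 k • J k).mulVec p.1) ^ 2) / kN p ^ 6 :=
  gradSq_kaplan_general n m J hskew
end
end

section
/- Let α > 2. For every M > 0 there exists a constant c(α,M) > 0 such that every (x,t) ∈ Ω_{α,M} satisfies |x| ≤ c(α,M); in other words, the sublevel set Ω_{α,M} is contained in the cylinder {(x,t) ∈ G : |x| ≤ c(α,M)}. -/
open MeasureTheory Filter
open scoped BigOperators ENNReal NNReal

noncomputable section

/-!
Write `U = N⁴ = |x|⁴ + 16|t|²` and `β = α/4`, so that `w_α = G ∘ U` with `G r = exp (-r^β)`.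
Since the `X_j` are derivations,
`V_α = β²/4 · U^{2β-2} Q - β(β-1)/2 · U^{β-2} Q + β/2 · U^{β-1} L U` with `Q = |∇_H U|²`,
and for skew-symmetric `J_k` one computes `Q = 16|x|⁶ + 256|J_t x|²` and
`L U = -(8n+8)|x|² - 8 ∑ₖ |J_k x|²`. The Métivier condition, through compactness of a product of
unit spheres, gives `|J_t x| ≥ c|t||x|`, hence `c|x|²U ≲ Q ≲ |x|²U`. This yields
`V_α ≥ β U^{β-1} |x|² (4βc U^β - K)` for a constant `K`, and with `P = U^{β-1/2} ≥ 1`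
(here `α > 2` is used) `V_α ≥ 4β²c|x|² - βK` as soon as the right-hand side is nonnegative.
-/

open Matrix Filter Topology Metric

theorem ContinuousLinearMap.exists_pos_mul_le_norm_apply₂ {E F G : Type*}
    [NormedAddCommGroup E] [NormedSpace ℝ E] [FiniteDimensional ℝ E]
    [NormedAddCommGroup F] [NormedSpace ℝ F] [FiniteDimensional ℝ F]
    [NormedAddCommGroup G] [NormedSpace ℝ G]
    (B : E →L[ℝ] F →L[ℝ] G) (hB : ∀ t x, B t x = 0 → t = 0 ∨ x = 0) :
    ∃ c > 0, ∀ t x, c * (‖t‖ * ‖x‖) ≤ ‖B t x‖ := by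
  have hK : IsCompact (sphere (0 : E) 1 ×ˢ sphere (0 : F) 1) :=
    (isCompact_sphere _ _).prod (isCompact_sphere _ _)
  obtain ⟨c, hc, hcK⟩ := hK.exists_forall_le' (f := fun y => ‖B y.1 y.2‖)
    B.continuous₂.norm.continuousOn (a := 0) (by
      rintro ⟨t, x⟩ ⟨ht, hx⟩
      rw [mem_sphere_zero_iff_norm] at ht hx
      refine norm_pos_iff.2 fun h => ?_
      rcases hB t x h with rfl | rfl <;> simp_all)
  refine ⟨c, hc, fun t x => ?_⟩
  rcases eq_or_ne t 0 with rfl | ht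
  · simp
  rcases eq_or_ne x 0 with rfl | hx
  · simp
  have := hcK (‖t‖⁻¹ • t, ‖x‖⁻¹ • x) ⟨by simp [norm_smul, ht], by simp [norm_smul, hx]⟩
  simp only [map_smul, _root_.smul_apply, norm_smul, norm_inv, norm_norm] at this
  calc c * (‖t‖ * ‖x‖) ≤ ‖x‖⁻¹ * (‖t‖⁻¹ * ‖B t x‖) * (‖t‖ * ‖x‖) := by gcongr
    _ = ‖B t x‖ := by field_simp

@[fun_prop]
theorem Matrix.differentiable_mulVec {ι : Type*} [Fintype ι] [DecidableEq ι]
    (A : Matrix ι ι ℝ) : Differentiable ℝ (fun x : ι → ℝ => A *ᵥ x) :=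
  (LinearMap.toContinuousLinearMap (Matrix.toLin' A)).differentiable

theorem Matrix.dotProduct_mulVec_self_eq_zero {ι : Type*} [Fintype ι] {A : Matrix ι ι ℝ}
    (hA : Aᵀ = -A) (x : ι → ℝ) : x ⬝ᵥ (A *ᵥ x) = 0 := by
  have h : x ⬝ᵥ (A *ᵥ x) = -(x ⬝ᵥ (A *ᵥ x)) := by
    conv_lhs => rw [dotProduct_mulVec, ← mulVec_transpose, hA, neg_mulVec, neg_dotProduct,
      dotProduct_comm]
  linarith

theorem Matrix.trace_eq_zero_of_transpose_eq_neg {ι : Type*} [Fintype ι] {A : Matrix ι ι ℝ}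
    (hA : Aᵀ = -A) : A.trace = 0 := by
  have h := trace_transpose A
  rw [hA, trace_neg] at h
  linarith

theorem hasDerivAt_exp_neg_rpow {β r : ℝ} (hr : 0 < r) :
    HasDerivAt (fun r => Real.exp (-(r ^ β))) (-(β * r ^ (β - 1)) * Real.exp (-(r ^ β))) r := by
  have h : HasDerivAt (fun r => -(r ^ β)) (-(β * r ^ (β - 1))) r :=
    (Real.hasDerivAt_rpow_const (Or.inl hr.ne')).neg
  exact h.exp.congr_deriv (mul_comm _ _)

theorem hasDerivAt_rpow_mul_exp_neg_rpow {β r : ℝ} (hr : 0 < r) :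
    HasDerivAt (fun r => -(β * r ^ (β - 1)) * Real.exp (-(r ^ β)))
      ((β ^ 2 * (r ^ (β - 1)) ^ 2 - β * (β - 1) * (r ^ (β - 1) / r)) * Real.exp (-(r ^ β))) r := by
  have h : HasDerivAt (fun r => -(β * r ^ (β - 1))) (-(β * ((β - 1) * r ^ (β - 1 - 1)))) r :=
    ((Real.hasDerivAt_rpow_const (Or.inl hr.ne')).const_mul β).neg
  refine (h.mul (hasDerivAt_exp_neg_rpow hr)).congr_deriv ?_
  rw [Real.rpow_sub_one hr.ne' (β - 1)]
  ring

theorem potential_lower_bound {β c C C₂ S U Q L : ℝ} (hβ : 1 / 2 < β) (hc : 0 < c)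
    (hC : 0 ≤ C) (hC₂ : 0 ≤ C₂) (hS : 1 ≤ S) (hSU : S ^ 2 ≤ U) (hQlow : 16 * c * S * U ≤ Q)
    (hQup : Q ≤ 16 * C * S * U) (hL : -(C₂ * S) ≤ L)
    (hlarge : β * (8 * |β - 1| * C + C₂ / 2) ≤ 4 * β ^ 2 * c * S) :
    4 * β ^ 2 * c * S - β * (8 * |β - 1| * C + C₂ / 2)
      ≤ β ^ 2 / 4 * (U ^ (β - 1)) ^ 2 * Q - β * (β - 1) / 2 * (U ^ (β - 1) / U) * Q
        + β / 2 * U ^ (β - 1) * L := by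
  have hK : 0 ≤ 8 * |β - 1| * C + C₂ / 2 := by positivity
  have hU : 0 < U := by nlinarith
  have hy : 0 < U ^ (β - 1) := Real.rpow_pos_of_pos hU _
  -- `P = U ^ (β - 1/2)`, and `β > 1/2` is exactly `α > 2`.
  have hP : 1 ≤ U ^ (β - 1) * √U := by
    rw [Real.sqrt_eq_rpow, ← Real.rpow_add hU]
    exact Real.one_le_rpow (by nlinarith) (by linarith)
  generalize U ^ (β - 1) = y at *
  generalize hPdef : y * √U = P at hP
  have hPsq : y ^ 2 * U = P ^ 2 := by rw [← hPdef, mul_pow, Real.sq_sqrt hU.le]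
  have hyS : y * S ≤ P := hPdef ▸ mul_le_mul_of_nonneg_left (Real.le_sqrt_of_sq_le hSU) hy.le
  have hQ0 : 0 ≤ Q := le_trans (by positivity) hQlow
  have hyUQ : y / U * Q ≤ 16 * C * (y * S) := by
    rw [div_mul_eq_mul_div, div_le_iff₀ hU]
    nlinarith
  have hsign : (β - 1) * (y / U * Q) ≤ |β - 1| * (16 * C * (y * S)) :=
    mul_le_mul (le_abs_self _) hyUQ (by positivity) (abs_nonneg _)
  have hbound : β * y * S * (4 * β * c * y * U - (8 * |β - 1| * C + C₂ / 2))
      ≤ β ^ 2 / 4 * y ^ 2 * Q - β * (β - 1) / 2 * (y / U) * Q + β / 2 * y * L := by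
    have h1 : 0 ≤ β ^ 2 / 4 * y ^ 2 * (Q - 16 * c * S * U) :=
      mul_nonneg (by positivity) (by linarith)
    have h2 : 0 ≤ β / 2 * (|β - 1| * (16 * C * (y * S)) - (β - 1) * (y / U * Q)) :=
      mul_nonneg (by linarith) (by linarith)
    have h3 : 0 ≤ β / 2 * y * (L + C₂ * S) := mul_nonneg (by positivity) (by linarith)
    linarith
  set a := 4 * β ^ 2 * c * S
  set b := β * (8 * |β - 1| * C + C₂ / 2)
  have hab : 0 ≤ a * (P + 1) - b := by
    have : 0 ≤ a * P := mul_nonneg (by positivity) (by linarith)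
    linarith
  calc a - b ≤ P * (a * P - b) := by nlinarith [mul_nonneg (sub_nonneg.2 hP) hab]
    _ = a * P ^ 2 - b * P := by ring
    _ ≤ a * (y ^ 2 * U) - b * (y * S) := by rw [hPsq]; gcongr
    _ = β * y * S * (4 * β * c * y * U - (8 * |β - 1| * C + C₂ / 2)) := by ring
    _ ≤ _ := hbound

namespace MetivierGroup

variable {n m : ℕ}

def horizDir (J : Fin m → Matrix (Fin (2*n)) (Fin (2*n)) ℝ) (j : Fin (2*n)) (p : GrpPt n m) :
    GrpPt n m :=
  (Pi.single j 1, fun k => (1/2 : ℝ) * (J k *ᵥ p.1) j)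

section HorizontalDerivative

variable {J : Fin m → Matrix (Fin (2*n)) (Fin (2*n)) ℝ} {j : Fin (2*n)} {p : GrpPt n m}

lemma XD_eq_fderiv_apply {E : Type*} [NormedAddCommGroup E] [NormedSpace ℝ E]
    (f : GrpPt n m → E) : XD J j f p = fderiv ℝ f p (horizDir J j p) := by
  have hdir : horizDir J j p = (Pi.single j 1, 0)
      + ∑ k, ((1/2 : ℝ) * (J k *ᵥ p.1) j) • ((0 : Fin (2*n) → ℝ), Pi.single k 1) := by
    ext k <;> simp [horizDir, Prod.fst_sum, Prod.snd_sum, Finset.sum_apply, Pi.single_apply]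
  rw [hdir, map_add, map_sum]
  simp only [XD, map_smul, Finset.smul_sum, smul_smul]

lemma XD_congr {E : Type*} [NormedAddCommGroup E] [NormedSpace ℝ E] {f g : GrpPt n m → E}
    (h : f =ᶠ[𝓝 p] g) : XD J j f p = XD J j g p := by
  simp only [XD_eq_fderiv_apply, h.fderiv_eq]

lemma XD_const (c : ℝ) : XD J j (fun _ : GrpPt n m => c) p = 0 := by
  simp [XD_eq_fderiv_apply]

lemma XD_add {f g : GrpPt n m → ℝ} (hf : DifferentiableAt ℝ f p) (hg : DifferentiableAt ℝ g p) :
    XD J j (fun q => f q + g q) p = XD J j f p + XD J j g p := by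
  simp [XD_eq_fderiv_apply, fderiv_fun_add hf hg]

lemma XD_mul {f g : GrpPt n m → ℝ} (hf : DifferentiableAt ℝ f p) (hg : DifferentiableAt ℝ g p) :
    XD J j (fun q => f q * g q) p = f p * XD J j g p + g p * XD J j f p := by
  simp [XD_eq_fderiv_apply, fderiv_fun_mul hf hg]

lemma XD_sum {ι : Type*} (s : Finset ι) {f : ι → GrpPt n m → ℝ}
    (hf : ∀ i ∈ s, DifferentiableAt ℝ (f i) p) :
    XD J j (fun q => ∑ i ∈ s, f i q) p = ∑ i ∈ s, XD J j (f i) p := by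
  simp [XD_eq_fderiv_apply, fderiv_fun_sum hf]

lemma XD_comp {g : ℝ → ℝ} {g' : ℝ} {f : GrpPt n m → ℝ} (hg : HasDerivAt g g' (f p))
    (hf : DifferentiableAt ℝ f p) : XD J j (fun q => g (f q)) p = g' * XD J j f p := by
  have h : HasFDerivAt (fun q => g (f q)) (g' • fderiv ℝ f p) p :=
    hg.comp_hasFDerivAt p hf.hasFDerivAt
  simp [XD_eq_fderiv_apply, h.fderiv]

lemma XD_pow {f : GrpPt n m → ℝ} (k : ℕ) (hf : DifferentiableAt ℝ f p) :
    XD J j (fun q => f q ^ k) p = k * f p ^ (k - 1) * XD J j f p :=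
  XD_comp (hasDerivAt_pow k _) hf

lemma XD_comp_eventuallyEq {g g' : ℝ → ℝ} {u : GrpPt n m → ℝ}
    (hg : ∀ᶠ r in 𝓝 (u p), HasDerivAt g (g' r) r) (hu : Differentiable ℝ u) :
    XD J j (fun q => g (u q)) =ᶠ[𝓝 p] fun q => g' (u q) * XD J j u q :=
  ((hu p).continuousAt.tendsto.eventually hg).mono fun q hq => XD_comp hq (hu q)

lemma XD_fst_apply (i : Fin (2*n)) :
    XD J j (fun q : GrpPt n m => q.1 i) p = (Pi.single j 1 : Fin (2*n) → ℝ) i := by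
  let L := (ContinuousLinearMap.proj i).comp
    (ContinuousLinearMap.fst ℝ (Fin (2*n) → ℝ) (Fin m → ℝ))
  have : HasFDerivAt (fun q : GrpPt n m => q.1 i) L p := by exact L.hasFDerivAt
  simp [XD_eq_fderiv_apply, this.fderiv, L, horizDir]

lemma XD_snd_apply (k : Fin m) :
    XD J j (fun q : GrpPt n m => q.2 k) p = 1/2 * (J k *ᵥ p.1) j := by
  let L := (ContinuousLinearMap.proj k).comp
    (ContinuousLinearMap.snd ℝ (Fin (2*n) → ℝ) (Fin m → ℝ))
  have : HasFDerivAt (fun q : GrpPt n m => q.2 k) L p := by exact L.hasFDerivAt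
  simp [XD_eq_fderiv_apply, this.fderiv, L, horizDir]

lemma XD_mulVec_apply (A : Matrix (Fin (2*n)) (Fin (2*n)) ℝ) (i : Fin (2*n)) :
    XD J j (fun q : GrpPt n m => (A *ᵥ q.1) i) p = A i j := by
  simp only [mulVec, dotProduct]
  rw [XD_sum _ fun _ _ => by fun_prop]
  simp (disch := fun_prop) [XD_mul, XD_const, XD_fst_apply, Pi.single_apply]

lemma XD_sum_sq_fst : XD J j (fun q : GrpPt n m => ∑ i, q.1 i ^ 2) p = 2 * p.1 j := by
  rw [XD_sum _ fun _ _ => by fun_prop]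
  simp (disch := fun_prop) [XD_pow, XD_fst_apply, Pi.single_apply]

lemma gradSq_comp {g : ℝ → ℝ} {g' : ℝ} {u : GrpPt n m → ℝ} (hg : HasDerivAt g g' (u p))
    (hu : DifferentiableAt ℝ u p) : gradSq J (g ∘ u) p = g' ^ 2 * gradSq J u p := by
  simp only [gradSq, Function.comp_def, XD_comp hg hu, mul_pow, Finset.mul_sum]

lemma LSub_comp {g g' : ℝ → ℝ} {g'' : ℝ} {u : GrpPt n m → ℝ}
    (hg : ∀ᶠ r in 𝓝 (u p), HasDerivAt g (g' r) r) (hg' : HasDerivAt g' g'' (u p))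
    (hu : Differentiable ℝ u) (hXu : ∀ j, DifferentiableAt ℝ (XD J j u) p) :
    LSub J (g ∘ u) p = -(g'' * gradSq J u p) + g' (u p) * LSub J u p := by
  have hXX : ∀ j, XD J j (XD J j (g ∘ u)) p
      = g'' * XD J j u p ^ 2 + g' (u p) * XD J j (XD J j u) p := by
    intro j
    rw [Function.comp_def, XD_congr (XD_comp_eventuallyEq hg hu),
      XD_mul (f := fun q => g' (u q)) (hg'.differentiableAt.comp p (hu p)) (hXu j),
      XD_comp hg' (hu p)]
    ring
  simp only [LSub, gradSq, hXX, Finset.sum_add_distrib, ← Finset.mul_sum]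
  ring

end HorizontalDerivative

lemma sum_sq_eq_e2norm_sq {k : ℕ} (x : Fin k → ℝ) : ∑ i, x i ^ 2 = e2norm x ^ 2 :=
  (Real.sq_sqrt (by positivity)).symm

lemma e2norm_eq_norm {k : ℕ} (x : Fin k → ℝ) :
    e2norm x = ‖(WithLp.toLp 2 x : EuclideanSpace ℝ (Fin k))‖ := by
  simp [e2norm, EuclideanSpace.norm_eq]

lemma e2norm_single {k : ℕ} (i : Fin k) : e2norm (Pi.single i 1 : Fin k → ℝ) = 1 := by
  simp [e2norm, Pi.single_apply]

def kN4 (p : GrpPt n m) : ℝ := (∑ i, p.1 i ^ 2) ^ 2 + 16 * ∑ k, p.2 k ^ 2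

lemma kN4_eq (p : GrpPt n m) : kN4 p = e2norm p.1 ^ 4 + 16 * e2norm p.2 ^ 2 := by
  rw [kN4, sum_sq_eq_e2norm_sq, sum_sq_eq_e2norm_sq]
  ring

lemma kN4_pos {p : GrpPt n m} (hp : p ≠ 0) : 0 < kN4 p := by
  obtain ⟨x, t⟩ := p
  rw [kN4_eq]
  have hxt : x ≠ 0 ∨ t ≠ 0 := by
    contrapose! hp
    simp [hp]
  rcases hxt with h | h
  · have : 0 < e2norm x := by simpa [e2norm_eq_norm] using h
    positivity
  · have : 0 < e2norm t := by simpa [e2norm_eq_norm] using h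
    positivity

lemma differentiable_kN4 : Differentiable ℝ (kN4 : GrpPt n m → ℝ) := by
  unfold kN4
  fun_prop

lemma wA_eq (α : ℝ) : wA α = (fun r => Real.exp (-(r ^ (α / 4)))) ∘ (kN4 : GrpPt n m → ℝ) := by
  funext p
  have hU : 0 ≤ kN4 p := by rw [kN4_eq]; positivity
  rw [Function.comp_apply, wA, kN, ← kN4_eq, ← Real.rpow_mul hU]
  ring_nf

def Jt (J : Fin m → Matrix (Fin (2*n)) (Fin (2*n)) ℝ) (t : Fin m → ℝ) :
    Matrix (Fin (2*n)) (Fin (2*n)) ℝ :=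
  ∑ k, t k • J k

variable {J : Fin m → Matrix (Fin (2*n)) (Fin (2*n)) ℝ}

lemma Jt_mulVec_apply (t : Fin m → ℝ) (x : Fin (2*n) → ℝ) (j : Fin (2*n)) :
    (Jt J t *ᵥ x) j = ∑ k, t k * (J k *ᵥ x) j := by
  simp [Jt, sum_mulVec, smul_mulVec, Finset.sum_apply]

lemma Jt_single (k : Fin m) : Jt J (Pi.single k 1) = J k := by
  simp [Jt, Pi.single_apply]

lemma Jt_transpose (hskew : ∀ k, (J k)ᵀ = -J k) (t : Fin m → ℝ) : (Jt J t)ᵀ = -Jt J t := by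
  simp [Jt, transpose_sum, hskew]

lemma XD_Jt_mulVec_apply (j i : Fin (2*n)) (p : GrpPt n m) :
    XD J j (fun q : GrpPt n m => (Jt J q.2 *ᵥ q.1) i) p
      = 1/2 * ∑ k, (J k *ᵥ p.1) j * (J k *ᵥ p.1) i + Jt J p.2 i j := by
  simp_rw [Jt_mulVec_apply]
  rw [XD_sum _ fun _ _ => by fun_prop]
  simp (disch := fun_prop) only [XD_mul, XD_snd_apply, XD_mulVec_apply]
  simp only [Jt, Matrix.sum_apply, Matrix.smul_apply, smul_eq_mul, Finset.mul_sum,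
    ← Finset.sum_add_distrib]
  exact Finset.sum_congr rfl fun k _ => by ring

lemma XD_kN4 (j : Fin (2*n)) :
    XD J j kN4 = fun q => 4 * (∑ i, q.1 i ^ 2) * q.1 j + 16 * (Jt J q.2 *ᵥ q.1) j := by
  ext q
  have hT : XD J j (fun q : GrpPt n m => ∑ k, q.2 k ^ 2) q = ∑ k, q.2 k * (J k *ᵥ q.1) j := by
    rw [XD_sum _ fun _ _ => by fun_prop]
    simp (disch := fun_prop) only [XD_pow, XD_snd_apply]
    exact Finset.sum_congr rfl fun k _ => by push_cast; ring
  unfold kN4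
  rw [XD_add (by fun_prop) (by fun_prop), XD_pow 2 (by fun_prop),
    XD_mul (by fun_prop) (by fun_prop), XD_sum_sq_fst, hT, XD_const, Jt_mulVec_apply]
  push_cast
  ring

lemma differentiable_Jt_mulVec_apply (i : Fin (2*n)) :
    Differentiable ℝ (fun q : GrpPt n m => (Jt J q.2 *ᵥ q.1) i) := by
  simp_rw [Jt_mulVec_apply]
  fun_prop

lemma differentiable_XD_kN4 (j : Fin (2*n)) : Differentiable ℝ (XD J j kN4) := by
  rw [XD_kN4]
  have := differentiable_Jt_mulVec_apply (J := J) j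
  fun_prop

lemma XD_XD_kN4 (j : Fin (2*n)) (p : GrpPt n m) :
    XD J j (XD J j kN4) p = 4 * (∑ i, p.1 i ^ 2) + 8 * p.1 j ^ 2
      + 8 * ∑ k, (J k *ᵥ p.1) j ^ 2 + 16 * Jt J p.2 j j := by
  have hJt := differentiable_Jt_mulVec_apply (J := J) j p
  rw [XD_kN4, XD_add (by fun_prop) (hJt.const_mul 16), XD_mul (by fun_prop) (by fun_prop),
    XD_mul (by fun_prop) (by fun_prop), XD_mul (by fun_prop) hJt, XD_sum_sq_fst,
    XD_Jt_mulVec_apply, XD_fst_apply]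
  simp only [XD_const, Pi.single_eq_same, ← sq]
  ring

lemma gradSq_kN4 (hskew : ∀ k, (J k)ᵀ = -J k) (p : GrpPt n m) :
    gradSq J kN4 p = 16 * e2norm p.1 ^ 6 + 256 * e2norm (Jt J p.2 *ᵥ p.1) ^ 2 := by
  have hcross : ∑ j, p.1 j * (Jt J p.2 *ᵥ p.1) j = 0 :=
    dotProduct_mulVec_self_eq_zero (Jt_transpose hskew p.2) p.1
  have hexp : ∀ j, (4 * (∑ i, p.1 i ^ 2) * p.1 j + 16 * (Jt J p.2 *ᵥ p.1) j) ^ 2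
      = 16 * (∑ i, p.1 i ^ 2) ^ 2 * p.1 j ^ 2
        + 128 * (∑ i, p.1 i ^ 2) * (p.1 j * (Jt J p.2 *ᵥ p.1) j)
        + 256 * (Jt J p.2 *ᵥ p.1) j ^ 2 := fun j => by ring
  simp only [gradSq, XD_kN4, hexp, Finset.sum_add_distrib, ← Finset.mul_sum, hcross]
  rw [sum_sq_eq_e2norm_sq p.1, sum_sq_eq_e2norm_sq (Jt J p.2 *ᵥ p.1)]
  ring

lemma LSub_kN4 (hskew : ∀ k, (J k)ᵀ = -J k) (p : GrpPt n m) :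
    LSub J kN4 p = -((8 * n + 8) * e2norm p.1 ^ 2 + 8 * ∑ k, e2norm (J k *ᵥ p.1) ^ 2) := by
  have htr : ∑ j, Jt J p.2 j j = 0 := trace_eq_zero_of_transpose_eq_neg (Jt_transpose hskew p.2)
  have hJ : ∑ j, ∑ k, (J k *ᵥ p.1) j ^ 2 = ∑ k, e2norm (J k *ᵥ p.1) ^ 2 := by
    rw [Finset.sum_comm]
    exact Finset.sum_congr rfl fun k _ => sum_sq_eq_e2norm_sq _
  simp only [LSub, XD_XD_kN4, Finset.sum_add_distrib, ← Finset.mul_sum, htr, hJ,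
    Finset.sum_const, Finset.card_univ, Fintype.card_fin, nsmul_eq_mul]
  rw [sum_sq_eq_e2norm_sq p.1]
  push_cast
  ring

variable (J) in
lemma VA_eq (α : ℝ) {p : GrpPt n m} (hp : p ≠ 0) :
    VA J α p = (α / 4) ^ 2 / 4 * (kN4 p ^ (α / 4 - 1)) ^ 2 * gradSq J kN4 p
      - α / 4 * (α / 4 - 1) / 2 * (kN4 p ^ (α / 4 - 1) / kN4 p) * gradSq J kN4 p
      + α / 4 / 2 * kN4 p ^ (α / 4 - 1) * LSub J kN4 p := by
  have hU := kN4_pos hp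
  have hG : ∀ᶠ r in 𝓝 (kN4 p), HasDerivAt (fun r => Real.exp (-(r ^ (α / 4))))
      (-(α / 4 * r ^ (α / 4 - 1)) * Real.exp (-(r ^ (α / 4)))) r :=
    eventually_of_mem (Ioi_mem_nhds hU) fun r hr => hasDerivAt_exp_neg_rpow hr
  rw [VA, wA_eq, gradSq_comp hG.self_of_nhds differentiable_kN4.differentiableAt,
    LSub_comp hG (hasDerivAt_rpow_mul_exp_neg_rpow hU) differentiable_kN4
      fun j => (differentiable_XD_kN4 j).differentiableAt, Function.comp_apply]
  field_simp
  ring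

variable (J) in
def jtBilin : EuclideanSpace ℝ (Fin m) →L[ℝ] EuclideanSpace ℝ (Fin (2*n)) →L[ℝ]
    EuclideanSpace ℝ (Fin (2*n)) :=
  LinearMap.toContinuousLinearMap ((toEuclideanCLM (𝕜 := ℝ)).toAlgEquiv.toLinearMap
    ∘ₗ Fintype.linearCombination ℝ J ∘ₗ (WithLp.linearEquiv 2 ℝ (Fin m → ℝ)).toLinearMap)

lemma jtBilin_apply (t : Fin m → ℝ) (x : Fin (2*n) → ℝ) :
    jtBilin J (WithLp.toLp 2 t) (WithLp.toLp 2 x) = WithLp.toLp 2 (Jt J t *ᵥ x) := by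
  simp [jtBilin, Jt, Fintype.linearCombination_apply, toEuclideanCLM_toLp, sum_mulVec,
    smul_mulVec, WithLp.toLp_sum, WithLp.toLp_smul]

lemma e2norm_Jt_mulVec_le (t : Fin m → ℝ) (x : Fin (2*n) → ℝ) :
    e2norm (Jt J t *ᵥ x) ≤ ‖jtBilin J‖ * e2norm t * e2norm x := by
  simpa only [e2norm_eq_norm, jtBilin_apply] using
    (jtBilin J).le_opNorm₂ (WithLp.toLp 2 t) (WithLp.toLp 2 x)

lemma exists_pos_mul_le_e2norm_Jt_mulVec (hMet : ∀ t : Fin m → ℝ, t ≠ 0 → IsUnit (Jt J t)) :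
    ∃ c > 0, ∀ t x, c * (e2norm t * e2norm x) ≤ e2norm (Jt J t *ᵥ x) := by
  obtain ⟨c, hc, h⟩ := (jtBilin J).exists_pos_mul_le_norm_apply₂ <| by
    rintro ⟨t⟩ ⟨x⟩ htx
    rw [jtBilin_apply] at htx
    by_contra! h0
    have hinj := mulVec_injective_iff_isUnit.mpr (hMet t (by simpa using h0.1))
    exact h0.2 (by simpa using hinj ((by simpa using htx) : Jt J t *ᵥ x = Jt J t *ᵥ 0))
  refine ⟨c, hc, fun t x => ?_⟩
  have := h (WithLp.toLp 2 t) (WithLp.toLp 2 x)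
  rwa [jtBilin_apply, ← e2norm_eq_norm, ← e2norm_eq_norm, ← e2norm_eq_norm] at this

lemma gradSq_kN4_bounds (hskew : ∀ k, (J k)ᵀ = -J k)
    (hMet : ∀ t : Fin m → ℝ, t ≠ 0 → IsUnit (Jt J t)) :
    ∃ c > 0, ∃ C ≥ 0, ∀ p : GrpPt n m,
      16 * c * e2norm p.1 ^ 2 * kN4 p ≤ gradSq J kN4 p ∧
        gradSq J kN4 p ≤ 16 * C * e2norm p.1 ^ 2 * kN4 p := by
  obtain ⟨c₀, hc₀, hlow⟩ := exists_pos_mul_le_e2norm_Jt_mulVec hMet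
  refine ⟨min 1 (c₀ ^ 2), by positivity, max 1 (‖jtBilin J‖ ^ 2), by positivity, fun p => ?_⟩
  rw [gradSq_kN4 hskew, kN4_eq]
  have hs : 0 ≤ e2norm p.1 := Real.sqrt_nonneg _
  have ht : 0 ≤ e2norm p.2 := Real.sqrt_nonneg _
  have hz_low : (c₀ * (e2norm p.2 * e2norm p.1)) ^ 2 ≤ e2norm (Jt J p.2 *ᵥ p.1) ^ 2 :=
    pow_le_pow_left₀ (by positivity) (hlow p.2 p.1) 2
  have hz_up : e2norm (Jt J p.2 *ᵥ p.1) ^ 2 ≤ (‖jtBilin J‖ * e2norm p.2 * e2norm p.1) ^ 2 :=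
    pow_le_pow_left₀ (Real.sqrt_nonneg _) (e2norm_Jt_mulVec_le p.2 p.1) 2
  have h6 : 0 ≤ e2norm p.1 ^ 6 := by positivity
  have h22 : 0 ≤ e2norm p.2 ^ 2 * e2norm p.1 ^ 2 := by positivity
  constructor
  · nlinarith [mul_le_mul_of_nonneg_right (min_le_left 1 (c₀ ^ 2)) h6,
      mul_le_mul_of_nonneg_right (min_le_right 1 (c₀ ^ 2)) h22]
  · nlinarith [mul_le_mul_of_nonneg_right (le_max_left 1 (‖jtBilin J‖ ^ 2)) h6,
      mul_le_mul_of_nonneg_right (le_max_right 1 (‖jtBilin J‖ ^ 2)) h22]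

lemma exists_le_LSub_kN4 (hskew : ∀ k, (J k)ᵀ = -J k) :
    ∃ C ≥ 0, ∀ p : GrpPt n m, -(C * e2norm p.1 ^ 2) ≤ LSub J kN4 p := by
  refine ⟨8 * n + 8 + 8 * m * ‖jtBilin J‖ ^ 2, by positivity, fun p => ?_⟩
  have hk : ∀ k, e2norm (J k *ᵥ p.1) ^ 2 ≤ ‖jtBilin J‖ ^ 2 * e2norm p.1 ^ 2 := fun k => by
    have h := e2norm_Jt_mulVec_le (J := J) (Pi.single k 1) p.1
    rw [Jt_single, e2norm_single, mul_one] at h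
    rw [← mul_pow]
    exact pow_le_pow_left₀ (Real.sqrt_nonneg _) h 2
  have hsum := Finset.sum_le_sum fun k (_ : k ∈ Finset.univ) => hk k
  simp only [Finset.sum_const, Finset.card_univ, Fintype.card_fin, nsmul_eq_mul] at hsum
  rw [LSub_kN4 hskew]
  nlinarith

theorem exists_sub_le_VA (hskew : ∀ k, (J k)ᵀ = -J k)
    (hMet : ∀ t : Fin m → ℝ, t ≠ 0 → IsUnit (Jt J t)) {α : ℝ} (hα : 2 < α) :
    ∃ a > 0, ∃ b, ∀ p : GrpPt n m, p ≠ 0 → 1 ≤ e2norm p.1 → b ≤ a * e2norm p.1 ^ 2 →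
      a * e2norm p.1 ^ 2 - b ≤ VA J α p := by
  obtain ⟨c, hc, C, hC, hQ⟩ := gradSq_kN4_bounds hskew hMet
  obtain ⟨C₂, hC₂, hL⟩ := exists_le_LSub_kN4 hskew
  refine ⟨4 * (α / 4) ^ 2 * c, by positivity, α / 4 * (8 * |α / 4 - 1| * C + C₂ / 2),
    fun p hp hx hlarge => ?_⟩
  have hSU : (e2norm p.1 ^ 2) ^ 2 ≤ kN4 p := by
    rw [kN4_eq]
    nlinarith [sq_nonneg (e2norm p.2)]
  rw [VA_eq J α hp]
  exact potential_lower_bound (by linarith) hc hC hC₂ (one_le_pow₀ hx) hSU (hQ p).1 (hQ p).2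
    (hL p) (by linarith)

end MetivierGroup

theorem sublevel_in_cylinder_general (n m : ℕ)
    (J : Fin m → Matrix (Fin (2*n)) (Fin (2*n)) ℝ)
    (hskew : ∀ k, (J k).transpose = -(J k))
    (hMet : ∀ t : Fin m → ℝ, t ≠ 0 → IsUnit (∑ k, t k • J k))
    (α : ℝ) (hα : 2 < α) :
    ∀ M : ℝ, 0 < M → ∃ c : ℝ, 0 < c ∧
      ∀ p : GrpPt n m, p ≠ 0 → VA J α p ≤ M → e2norm p.1 ≤ c := by
  intro M hM
  obtain ⟨a, ha, b, hV⟩ := MetivierGroup.exists_sub_le_VA hskew hMet hα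
  refine ⟨max 1 √((M + b) / a), by positivity, fun p hp hVM => ?_⟩
  by_contra! hx
  have hx1 : 1 ≤ e2norm p.1 := (le_max_left _ _).trans hx.le
  have hMb : M + b < a * e2norm p.1 ^ 2 := by
    have := (Real.sqrt_lt' (by linarith)).1 ((le_max_right _ _).trans_lt hx)
    rwa [div_lt_iff₀ ha, mul_comm] at this
  linarith [hV p hp hx1 (by linarith)]

/-- For `α > 2` the sublevel sets of `V_α` are contained in cylinders. -/
theorem sublevel_in_cylinder (n m : ℕ) (hn : 1 ≤ n) (hm : 1 ≤ m)
    (J : Fin m → Matrix (Fin (2*n)) (Fin (2*n)) ℝ)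
    (hskew : ∀ k, (J k).transpose = -(J k))
    (hMet : ∀ t : Fin m → ℝ, t ≠ 0 → IsUnit (∑ k, t k • J k))
    (α : ℝ) (hα : 2 < α) :
    ∀ M : ℝ, 0 < M → ∃ c : ℝ, 0 < c ∧
      ∀ p : GrpPt n m, p ≠ 0 → VA J α p ≤ M → e2norm p.1 ≤ c :=
  sublevel_in_cylinder_general n m J hskew hMet α hα
end
end
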